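/- arXiv:1812.06000 — 2 statements merged into one kernel-verified Lean document; each statement's English description precedes it below -/
import Mathlib

section
/- The cumulative rank-crossover process of the small portfolio relative to the big portfolio, K_{sb}(T) := log(V_s(T)/V_b(T)) − (log(Θ_s(T)/Θ_b(T)) − log(Θ_s(0)/Θ_b(0))), is nonnegative and nondecreasing in T. -/
lemma sum_bot_le_aux {N : ℕ} (p : Fin N → ℝ) (A T : Finset (Fin N))
    (hcard : T.card = A.card)
    (hbot : ∀ i ∈ A, ∀ j ∉ A, p i ≤ p j) : ∑ i ∈ A, p i ≤ ∑ i ∈ T, p i := by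
  have hc : (A \ T).card = (T \ A).card := Finset.card_sdiff_comm hcard.symm
  let e := Finset.equivOfCardEq hc
  have h1 : ∑ i ∈ A \ T, p i ≤ ∑ i ∈ T \ A, p i := by
    rw [← Finset.sum_coe_sort (A \ T) p, ← Finset.sum_coe_sort (T \ A) p,
      ← e.sum_comp (fun x => p x.1)]
    apply Finset.sum_le_sum
    intro x _
    exact hbot x.1 (Finset.mem_sdiff.mp x.2).1 (e x).1
      (Finset.mem_sdiff.mp (e x).2).2
  have h2 : ∑ i ∈ A ∩ T, p i + ∑ i ∈ A \ T, p i = ∑ i ∈ A, p i :=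
    Finset.sum_inter_add_sum_sdiff A T p
  have h3 : ∑ i ∈ T ∩ A, p i + ∑ i ∈ T \ A, p i = ∑ i ∈ T, p i :=
    Finset.sum_inter_add_sum_sdiff T A p
  rw [Finset.inter_comm] at h3
  linarith

/-- the cumulative rank-crossover process of the small portfolio relative to the big portfolio is nonnegative and nondecreasing. -/
theorem small_vs_big_crossover_process_monotone
    (N c : ℕ) (hc : 1 ≤ c) (hcN : c < N)
    (p : ℕ → Fin N → ℝ) (hp : ∀ t i, 0 < p t i)
    (S : ℕ → Finset (Fin N)) (hScard : ∀ t, (S t).card = N - c)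
    (hbot : ∀ t, ∀ i ∈ S t, ∀ j ∉ S t, p t i ≤ p t j)
    (Vm B G Θs Θb Vs Vb C : ℕ → ℝ)
    (hVm : ∀ t, Vm t = ∑ i, p t i)
    (hB : ∀ t, B t = ∑ i ∈ S t, p t i)
    (hG : ∀ t, G t = ∑ i ∈ (S t)ᶜ, p t i)
    (hΘs : ∀ t, Θs t = B t / Vm t)
    (hΘb : ∀ t, Θb t = G t / Vm t)
    (hVs0 : Vs 0 = Vm 0)
    (hVs : ∀ t, Vs (t + 1) = Vs t * (∑ i ∈ S t, p (t + 1) i) / B t)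
    (hVb0 : Vb 0 = Vm 0)
    (hVb : ∀ t, Vb (t + 1) = Vb t * (∑ i ∈ (S t)ᶜ, p (t + 1) i) / G t)
    (hC : ∀ t, C t = (∑ i ∈ S t, p (t + 1) i) - B (t + 1))
    (Ksb : ℕ → ℝ)
    (hKsb : ∀ T, Ksb T =
      Real.log (Vs T / Vb T) - (Real.log (Θs T / Θb T) - Real.log (Θs 0 / Θb 0))) :
    (∀ T, 0 ≤ Ksb T) ∧ Monotone Ksb := by
  have hNpos : 0 < N := lt_trans (Nat.lt_of_lt_of_le Nat.zero_lt_one hc) hcN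
  haveI : Nonempty (Fin N) := ⟨⟨0, hNpos⟩⟩
  have hSne : ∀ t, (S t).Nonempty := fun t =>
    Finset.card_pos.mp (by rw [hScard]; omega)
  have hScne : ∀ t, ((S t)ᶜ : Finset (Fin N)).Nonempty := fun t =>
    Finset.card_pos.mp (by rw [Finset.card_compl, hScard, Fintype.card_fin]; omega)
  have hBpos : ∀ t s, 0 < ∑ i ∈ S s, p t i := fun t s =>
    Finset.sum_pos (fun i _ => hp t i) (hSne s)
  have hGpos : ∀ t s, 0 < ∑ i ∈ (S s)ᶜ, p t i := fun t s =>
    Finset.sum_pos (fun i _ => hp t i) (hScne s)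
  have hBp : ∀ t, 0 < B t := fun t => (hB t) ▸ hBpos t t
  have hGp : ∀ t, 0 < G t := fun t => (hG t) ▸ hGpos t t
  have hVmp : ∀ t, 0 < Vm t := fun t => (hVm t) ▸
    Finset.sum_pos (fun i _ => hp t i) Finset.univ_nonempty
  have hVsp : ∀ t, 0 < Vs t := by
    intro t
    induction t with
    | zero => rw [hVs0]; exact hVmp 0
    | succ n ih => rw [hVs n]; exact div_pos (mul_pos ih (hBpos (n+1) n)) (hBp n)
  have hVbp : ∀ t, 0 < Vb t := by
    intro t
    induction t with
    | zero => rw [hVb0]; exact hVmp 0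
    | succ n ih => rw [hVb n]; exact div_pos (mul_pos ih (hGpos (n+1) n)) (hGp n)
  -- crossover nonnegativity
  have hkey1 : ∀ t, B (t+1) ≤ ∑ i ∈ S t, p (t+1) i := by
    intro t
    rw [hB]
    exact sum_bot_le_aux (p (t+1)) (S (t+1)) (S t)
      (by rw [hScard, hScard]) (hbot (t+1))
  have hsum : ∀ t s, ∑ i ∈ S s, p t i + ∑ i ∈ (S s)ᶜ, p t i = Vm t := by
    intro t s
    rw [hVm]
    exact Finset.sum_add_sum_compl (S s) (p t)
  have hkey2 : ∀ t, ∑ i ∈ (S t)ᶜ, p (t+1) i ≤ G (t+1) := by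
    intro t
    have h1 := hsum (t+1) t
    have h2 := hsum (t+1) (t+1)
    have h3 := hkey1 t
    rw [← hB (t+1), ← hG (t+1)] at h2
    linarith
  -- log helpers
  have hlogdiv : ∀ a b : ℝ, 0 < a → 0 < b →
      Real.log (a / b) = Real.log a - Real.log b := fun a b ha hb =>
    Real.log_div ha.ne' hb.ne'
  have step : ∀ t, Ksb t ≤ Ksb (t + 1) := by
    intro t
    have hAs := hBpos (t+1) t
    have hAb := hGpos (t+1) t
    rw [hKsb, hKsb, hVs t, hVb t, hΘs (t+1), hΘb (t+1), hΘs t, hΘb t]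
    have L1 : Real.log (Vs t / Vb t) = Real.log (Vs t) - Real.log (Vb t) :=
      hlogdiv _ _ (hVsp t) (hVbp t)
    have Lq : ∀ s, Real.log (B s / Vm s / (G s / Vm s)) =
        Real.log (B s) - Real.log (G s) := by
      intro s
      have : B s / Vm s / (G s / Vm s) = B s / G s := by
        rw [div_div_div_comm, div_self (hVmp s).ne', div_one]
      rw [this, hlogdiv _ _ (hBp s) (hGp s)]
    have L3 : Real.log (Vs t * (∑ i ∈ S t, p (t+1) i) / B t /
        (Vb t * (∑ i ∈ (S t)ᶜ, p (t+1) i) / G t)) =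
        (Real.log (Vs t) + Real.log (∑ i ∈ S t, p (t+1) i) - Real.log (B t)) -
        (Real.log (Vb t) + Real.log (∑ i ∈ (S t)ᶜ, p (t+1) i) - Real.log (G t)) := by
      rw [hlogdiv _ _ (div_pos (mul_pos (hVsp t) hAs) (hBp t))
          (div_pos (mul_pos (hVbp t) hAb) (hGp t)),
        hlogdiv _ _ (mul_pos (hVsp t) hAs) (hBp t),
        hlogdiv _ _ (mul_pos (hVbp t) hAb) (hGp t),
        Real.log_mul (hVsp t).ne' hAs.ne',
        Real.log_mul (hVbp t).ne' hAb.ne']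
    rw [L1, Lq t, Lq (t+1), L3]
    have I1 : Real.log (B (t+1)) ≤ Real.log (∑ i ∈ S t, p (t+1) i) :=
      Real.log_le_log (hBp (t+1)) (hkey1 t)
    have I2 : Real.log (∑ i ∈ (S t)ᶜ, p (t+1) i) ≤ Real.log (G (t+1)) :=
      Real.log_le_log hAb (hkey2 t)
    linarith
  have hmono : Monotone Ksb := monotone_nat_of_le_succ step
  have h0 : Ksb 0 = 0 := by
    rw [hKsb, hVs0, hVb0, div_self (hVmp 0).ne']
    simp
  exact ⟨fun T => h0 ▸ hmono (Nat.zero_le T), hmono⟩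
end

section
/- Rank effect for small versus big: for any time T, if the price of the bottom-ranked subset relative to the top-ranked subset has not fallen, i.e. Θ_s(T)·Θ_b(0) ≥ Θ_s(0)·Θ_b(T), then the small portfolio weakly outperforms the big portfolio: V_s(T) ≥ V_b(T). -/
lemma bottom_sum_le' {N : ℕ} (q : Fin N → ℝ) (A A' : Finset (Fin N))
    (hcard : A.card = A'.card)
    (hbot : ∀ i ∈ A', ∀ j ∉ A', q i ≤ q j) :
    ∑ i ∈ A', q i ≤ ∑ i ∈ A, q i := by
  have h1 := Finset.sum_inter_add_sum_sdiff A' A q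
  have h2 := Finset.sum_inter_add_sum_sdiff A A' q
  have hcd : (A' \ A).card = (A \ A').card := by
    have c1 := Finset.card_sdiff_add_card_inter A' A
    have c2 := Finset.card_sdiff_add_card_inter A A'
    rw [Finset.inter_comm] at c2
    omega
  have key : ∑ i ∈ A' \ A, q i ≤ ∑ i ∈ A \ A', q i := by
    rcases (A \ A').eq_empty_or_nonempty with he | hne
    · have : A' \ A = ∅ := Finset.card_eq_zero.mp (by rw [hcd, he]; simp)
      rw [this, he]
    · obtain ⟨j, hjmem, hjmin⟩ := Finset.exists_min_image (A \ A') q hne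
      have hjA' : j ∉ A' := (Finset.mem_sdiff.mp hjmem).2
      calc ∑ i ∈ A' \ A, q i ≤ (A' \ A).card • q j := by
            apply Finset.sum_le_card_nsmul
            intro i hi
            exact hbot i (Finset.mem_sdiff.mp hi).1 j hjA'
        _ = (A \ A').card • q j := by rw [hcd]
        _ ≤ ∑ i ∈ A \ A', q i := Finset.card_nsmul_le_sum _ _ _ hjmin
  have : ∑ i ∈ A' ∩ A, q i = ∑ i ∈ A ∩ A', q i := by rw [Finset.inter_comm]
  linarith

/-- rank effect for small versus big: if the price of the bottom-ranked subset relative to the top-ranked subset has not fallen, the small portfolio weakly outperforms the big portfolio. -/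
theorem rank_effect_small_vs_big
    (N c : ℕ) (hc : 1 ≤ c) (hcN : c < N)
    (p : ℕ → Fin N → ℝ) (hp : ∀ t i, 0 < p t i)
    (S : ℕ → Finset (Fin N)) (hScard : ∀ t, (S t).card = N - c)
    (hbot : ∀ t, ∀ i ∈ S t, ∀ j ∉ S t, p t i ≤ p t j)
    (Vm B G Θs Θb Vs Vb C : ℕ → ℝ)
    (hVm : ∀ t, Vm t = ∑ i, p t i)
    (hB : ∀ t, B t = ∑ i ∈ S t, p t i)
    (hG : ∀ t, G t = ∑ i ∈ (S t)ᶜ, p t i)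
    (hΘs : ∀ t, Θs t = B t / Vm t)
    (hΘb : ∀ t, Θb t = G t / Vm t)
    (hVs0 : Vs 0 = Vm 0)
    (hVs : ∀ t, Vs (t + 1) = Vs t * (∑ i ∈ S t, p (t + 1) i) / B t)
    (hVb0 : Vb 0 = Vm 0)
    (hVb : ∀ t, Vb (t + 1) = Vb t * (∑ i ∈ (S t)ᶜ, p (t + 1) i) / G t)
    (hC : ∀ t, C t = (∑ i ∈ S t, p (t + 1) i) - B (t + 1)) :
    ∀ T, Θs T * Θb 0 ≥ Θs 0 * Θb T → Vs T ≥ Vb T := by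
  -- basic positivity
  haveI : Nonempty (Fin N) := ⟨⟨0, by omega⟩⟩
  have hSne : ∀ t, (S t).Nonempty := fun t =>
    Finset.card_pos.mp (by rw [hScard t]; omega)
  have hScne : ∀ t, ((S t)ᶜ).Nonempty := fun t =>
    Finset.card_pos.mp (by rw [Finset.card_compl, hScard t]; simp [Fintype.card_fin]; omega)
  have hBpos : ∀ t, 0 < B t := fun t => by
    rw [hB t]; exact Finset.sum_pos (fun i _ => hp t i) (hSne t)
  have hGpos : ∀ t, 0 < G t := fun t => by
    rw [hG t]; exact Finset.sum_pos (fun i _ => hp t i) (hScne t)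
  have hVmpos : ∀ t, 0 < Vm t := fun t => by
    rw [hVm t]
    exact Finset.sum_pos (fun i _ => hp t i) (Finset.univ_nonempty)
  have hcard : ∀ t, (S t).card = (S (t + 1)).card := fun t => by
    rw [hScard, hScard]
  -- sum over S t at time t+1 dominates B (t+1)
  have hBstep : ∀ t, B (t + 1) ≤ ∑ i ∈ S t, p (t + 1) i := fun t => by
    rw [hB (t + 1)]
    exact bottom_sum_le' (p (t + 1)) (S t) (S (t + 1)) (hcard t) (hbot (t + 1))
  -- sum over (S t)ᶜ at time t+1 is dominated by G (t+1)
  have hGstep : ∀ t, (∑ i ∈ (S t)ᶜ, p (t + 1) i) ≤ G (t + 1) := fun t => by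
    rw [hG (t + 1)]
    have hVmsplit : ∀ A : Finset (Fin N),
        (∑ i ∈ A, p (t+1) i) + (∑ i ∈ Aᶜ, p (t+1) i) = ∑ i, p (t+1) i := fun A =>
      Finset.sum_add_sum_compl A _
    have h1 := hVmsplit (S t)
    have h2 := hVmsplit (S (t + 1))
    have := hBstep t
    rw [hB (t + 1)] at this
    linarith
  -- small portfolio lower bound
  have hVslb : ∀ t, Vm 0 * B t ≤ Vs t * B 0 := by
    intro t
    induction t with
    | zero => rw [hVs0]
    | succ t ih =>
      have hsum : 0 < ∑ i ∈ S t, p (t + 1) i :=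
        Finset.sum_pos (fun i _ => hp (t + 1) i) (hSne t)
      rw [hVs t]
      have h1 : Vm 0 * (∑ i ∈ S t, p (t + 1) i) ≤
          Vs t * (∑ i ∈ S t, p (t + 1) i) / B t * B 0 := by
        rw [div_mul_eq_mul_div, le_div_iff₀ (hBpos t)]
        calc Vm 0 * (∑ i ∈ S t, p (t + 1) i) * B t
            = (Vm 0 * B t) * (∑ i ∈ S t, p (t + 1) i) := by ring
          _ ≤ (Vs t * B 0) * (∑ i ∈ S t, p (t + 1) i) :=
              mul_le_mul_of_nonneg_right ih hsum.le
          _ = Vs t * (∑ i ∈ S t, p (t + 1) i) * B 0 := by ring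
      have h2 : Vm 0 * B (t + 1) ≤ Vm 0 * (∑ i ∈ S t, p (t + 1) i) :=
        mul_le_mul_of_nonneg_left (hBstep t) (hVmpos 0).le
      linarith
  -- big portfolio upper bound
  have hVbub : ∀ t, Vb t * G 0 ≤ Vm 0 * G t := by
    intro t
    induction t with
    | zero => rw [hVb0]
    | succ t ih =>
      have hsum : 0 < ∑ i ∈ (S t)ᶜ, p (t + 1) i :=
        Finset.sum_pos (fun i _ => hp (t + 1) i) (hScne t)
      rw [hVb t]
      have h1 : Vb t * (∑ i ∈ (S t)ᶜ, p (t + 1) i) / G t * G 0 ≤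
          Vm 0 * (∑ i ∈ (S t)ᶜ, p (t + 1) i) := by
        rw [div_mul_eq_mul_div, div_le_iff₀ (hGpos t)]
        calc Vb t * (∑ i ∈ (S t)ᶜ, p (t + 1) i) * G 0
            = (Vb t * G 0) * (∑ i ∈ (S t)ᶜ, p (t + 1) i) := by ring
          _ ≤ (Vm 0 * G t) * (∑ i ∈ (S t)ᶜ, p (t + 1) i) :=
              mul_le_mul_of_nonneg_right ih hsum.le
          _ = Vm 0 * (∑ i ∈ (S t)ᶜ, p (t + 1) i) * G t := by ring
      have h2 : Vm 0 * (∑ i ∈ (S t)ᶜ, p (t + 1) i) ≤ Vm 0 * G (t + 1) :=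
        mul_le_mul_of_nonneg_left (hGstep t) (hVmpos 0).le
      linarith
  intro T hΘ
  -- translate hypothesis into B T * G 0 ≥ B 0 * G T
  have hcross : B 0 * G T ≤ B T * G 0 := by
    rw [hΘs T, hΘs 0, hΘb T, hΘb 0] at hΘ
    rw [div_mul_div_comm, div_mul_div_comm, ge_iff_le,
      div_le_div_iff₀ (mul_pos (hVmpos 0) (hVmpos T)) (mul_pos (hVmpos T) (hVmpos 0))] at hΘ
    have h' : (B 0 * G T) * (Vm T * Vm 0) ≤ (B T * G 0) * (Vm T * Vm 0) := by linarith
    exact le_of_mul_le_mul_right h' (mul_pos (hVmpos T) (hVmpos 0))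
  have h1 := hVslb T
  have h2 := hVbub T
  have hB0 := hBpos 0
  have hG0 := hGpos 0
  have hVm0 := hVmpos 0
  have key : Vb T * (B 0 * G 0) ≤ Vs T * (B 0 * G 0) := by
    nlinarith [mul_le_mul_of_nonneg_right h1 hG0.le,
      mul_le_mul_of_nonneg_right h2 hB0.le,
      mul_le_mul_of_nonneg_left hcross hVm0.le]
  exact le_of_mul_le_mul_right key (mul_pos hB0 hG0)
end
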